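/- Every nonempty subset of a connected U-equivalence space (X,U) is U-equivalently dense in X. (Key lemma: for any U ∈ U and A ⊆ X, the set U[A] = ⋃_{x∈A} U[x] is clopen in (X, T_U).) -/

import Mathlib

/-- `U` is an equivalence relation on `X`, viewed as a subset of `X × X`. -/
def IsEquivRel {X : Type*} (U : Set (X × X)) : Prop :=
  (∀ x, (x, x) ∈ U) ∧ (∀ x y, (x, y) ∈ U → (y, x) ∈ U) ∧
    (∀ x y z, (x, y) ∈ U → (y, z) ∈ U → (x, z) ∈ U)

/-- A `U`-equivalence class on `X`: a nonempty collection of equivalence relations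
closed under binary intersections. -/
def IsUClass {X : Type*} (𝒰 : Set (Set (X × X))) : Prop :=
  𝒰.Nonempty ∧ (∀ U ∈ 𝒰, IsEquivRel U) ∧ ∀ U ∈ 𝒰, ∀ V ∈ 𝒰, U ∩ V ∈ 𝒰

/-- `(f × f)⁻¹(V)`. -/
def preim2 {X Y : Type*} (f : X → Y) (V : Set (Y × Y)) : Set (X × X) :=
  {p | (f p.1, f p.2) ∈ V}

/-- `f : (X,𝒰) → (Y,𝒱)` is `U`-equivalently continuous. -/
def UCont {X Y : Type*} (𝒰 : Set (Set (X × X))) (𝒱 : Set (Set (Y × Y))) (f : X → Y) : Prop :=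
  ∀ V ∈ 𝒱, preim2 f V ∈ 𝒰

/-- `U[x] = {y | (x,y) ∈ U}`. -/
def cls {X : Type*} (U : Set (X × X)) (x : X) : Set X := {y | (x, y) ∈ U}

/-- The collection of all finite nonempty intersections of members of `S`. -/
def genClass {X : Type*} (S : Set (Set (X × X))) : Set (Set (X × X)) :=
  {U | ∃ T : Finset (Set (X × X)), ↑T ⊆ S ∧ T.Nonempty ∧ U = ⋂₀ ↑T}

/-- The relative class `𝒱/A`, transported to the subtype `A`. -/
def relClass {Y : Type*} (𝒱 : Set (Set (Y × Y))) (A : Set Y) : Set (Set (A × A)) :=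
  preim2 (Subtype.val : A → Y) '' 𝒱

/-- `f : (X,𝒰) → (Y,𝒱)` is `U`-equivalently open. -/
def UOpenMap {X Y : Type*} (𝒰 : Set (Set (X × X))) (𝒱 : Set (Set (Y × Y))) (f : X → Y) : Prop :=
  ∀ U ∈ 𝒰, ∃ V ∈ 𝒱, ∀ x, cls V (f x) ⊆ f '' cls U x

/-- The topology induced by a `U`-equivalence class, generated by the base `{U[x]}`. -/
def UTop {X : Type*} (𝒰 : Set (Set (X × X))) : TopologicalSpace X :=
  TopologicalSpace.generateFrom {S | ∃ U ∈ 𝒰, ∃ x, S = cls U x}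

/-- The product `U`-equivalence class, generated by preimages under the projections. -/
def prodClass {I : Type*} {X : I → Type*} (𝒰 : ∀ i, Set (Set (X i × X i))) :
    Set (Set ((∀ i, X i) × (∀ i, X i))) :=
  genClass {S | ∃ i, ∃ U ∈ 𝒰 i, S = preim2 (fun f => f i) U}

/-- A `U`-equivalence: a bijection which is `U`-equivalently continuous with
`U`-equivalently continuous inverse. -/
def IsUEquiv {X Y : Type*} (𝒰 : Set (Set (X × X))) (𝒱 : Set (Set (Y × Y))) (f : X → Y) : Prop :=
  Function.Bijective f ∧ UCont 𝒰 𝒱 f ∧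
    ∃ g : Y → X, Function.LeftInverse g f ∧ Function.RightInverse g f ∧ UCont 𝒱 𝒰 g

/-- A `U`-embedding: injective, and a `U`-equivalence onto its range with the relative class. -/
def IsUEmbedding {X Y : Type*} (𝒰 : Set (Set (X × X))) (𝒱 : Set (Set (Y × Y))) (f : X → Y) :
    Prop :=
  Function.Injective f ∧ IsUEquiv 𝒰 (relClass 𝒱 (Set.range f)) (Set.rangeFactorization f)

/-- Total boundedness of a `U`-equivalence space. -/
def TotallyBddU {X : Type*} (𝒰 : Set (Set (X × X))) : Prop :=
  ∀ U ∈ 𝒰, ∃ t : Finset X, ∀ x : X, ∃ y ∈ t, (y, x) ∈ U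

/-- `φ : (Y,𝒱) → Z` is transverse to `Y`: `(φ×φ)⁻¹(ΔZ) ∩ V = ΔY` for some `V ∈ 𝒱`. -/
def Transv {Y Z : Type*} (𝒱 : Set (Set (Y × Y))) (φ : Y → Z) : Prop :=
  ∃ V ∈ 𝒱, ∀ y y', (y, y') ∈ V → φ y = φ y' → y = y'

/-- `f : X → (Y,𝒱)` is a `U`-equivalent surjection. -/
def USurjOn {X Y : Type*} (𝒱 : Set (Set (Y × Y))) (f : X → Y) : Prop :=
  ∀ y : Y, ∀ V ∈ 𝒱, ∃ x : X, y ∈ cls V (f x)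

/-- `D` is `U`-equivalently dense in `(X,𝒰)`. -/
def UDense {X : Type*} (𝒰 : Set (Set (X × X))) (D : Set X) : Prop :=
  ∀ x : X, ∀ U ∈ 𝒰, ∃ a ∈ D, (a, x) ∈ U

/-!
Each `U ∈ 𝒰` is an equivalence relation whose classes are basic open sets, so a union of
`U`-classes is open; its complement is again a union of `U`-classes, hence open too. In a
connected space the clopen set `U[A]` of a nonempty `A` is everything, which is exactly density.
-/

section UTop

variable {X : Type*} {𝒰 : Set (Set (X × X))} {U : Set (X × X)}

theorem isOpen_cls (hU : U ∈ 𝒰) (x : X) : @IsOpen X (UTop 𝒰) (cls U x) :=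
  TopologicalSpace.GenerateOpen.basic _ ⟨U, hU, x, rfl⟩

theorem isOpen_iUnion_cls (hU : U ∈ 𝒰) (A : Set X) : @IsOpen X (UTop 𝒰) (⋃ a ∈ A, cls U a) :=
  @isOpen_biUnion X X (UTop 𝒰) _ _ fun a _ => isOpen_cls hU a

theorem compl_iUnion_cls (hE : IsEquivRel U) (A : Set X) :
    (⋃ a ∈ A, cls U a)ᶜ = ⋃ x ∈ (⋃ a ∈ A, cls U a)ᶜ, cls U x := by
  obtain ⟨hrefl, hsymm, htrans⟩ := hE
  ext y
  simp only [cls, Set.mem_iUnion, Set.mem_compl_iff, Set.mem_ofPred_eq, exists_prop]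
  constructor
  · exact fun hy => ⟨y, hy, hrefl y⟩
  · rintro ⟨x, hx, hxy⟩ ⟨a, ha, hay⟩
    exact hx ⟨a, ha, htrans a y x hay (hsymm x y hxy)⟩

theorem isClopen_iUnion_cls (hU : U ∈ 𝒰) (hE : IsEquivRel U) (A : Set X) :
    @IsClopen X (UTop 𝒰) (⋃ a ∈ A, cls U a) := by
  let := UTop 𝒰
  refine ⟨?_, isOpen_iUnion_cls hU A⟩
  rw [← isOpen_compl_iff, compl_iUnion_cls hE A]
  exact isOpen_iUnion_cls hU _

theorem uDense_of_nonempty [@PreconnectedSpace X (UTop 𝒰)]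
    (h𝒰 : ∀ U ∈ 𝒰, IsEquivRel U) {A : Set X} (hA : A.Nonempty) : UDense 𝒰 A := by
  let := UTop 𝒰
  intro x U hU
  obtain ⟨a₀, ha₀⟩ := hA
  have hne : (⋃ a ∈ A, cls U a).Nonempty := ⟨a₀, Set.mem_biUnion ha₀ ((h𝒰 U hU).1 a₀)⟩
  have hx : x ∈ ⋃ a ∈ A, cls U a :=
    Set.eq_univ_iff_forall.mp ((isClopen_iUnion_cls hU (h𝒰 U hU) A).eq_univ hne) x
  simpa only [cls, Set.mem_iUnion, Set.mem_ofPred_eq, exists_prop] using hx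

end UTop

theorem stmt15 {X : Type*} (𝒰 : Set (Set (X × X))) (h𝒰 : IsUClass 𝒰)
    (hconn : @ConnectedSpace X (UTop 𝒰)) :
    (∀ U ∈ 𝒰, ∀ A : Set X, @IsClopen X (UTop 𝒰) (⋃ a ∈ A, cls U a)) ∧
      ∀ A : Set X, A.Nonempty → UDense 𝒰 A :=
  ⟨fun U hU A => isClopen_iUnion_cls hU (h𝒰.2.1 U hU) A,
    fun _ hA => @uDense_of_nonempty X 𝒰 hconn.toPreconnectedSpace h𝒰.2.1 _ hA⟩
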